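/- Let H be a complex Hilbert space, let A be a bounded self-adjoint operator on H, and let Θ be a bounded operator on H; for s ∈ ℝ write cos(sA) := (exp(isA) + exp(-isA))/2, where exp denotes the exponential in the Banach algebra of bounded operators on H, and S_A(t) := ∫₀ᵗ cos(τA) dτ (Bochner integral). Then for every s ∈ ℝ, Θ ∘ cos(sA) − cos(sA) ∘ Θ = ∫₀ˢ S_A(s−r) ∘ (A²Θ − ΘA²) ∘ cos(rA) dr, the integral being a Bochner integral in the Banach algebra of bounded operators. -/

import Mathlib

open MeasureTheory Filter Topology intervalIntegral

/-- The operator cosine family `cos (s A) = (exp (i s A) + exp (-i s A)) / 2` of a bounded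
operator `A` on a complex Hilbert space. -/
noncomputable def opCos {H : Type*} [NormedAddCommGroup H] [InnerProductSpace ℂ H]
    [CompleteSpace H] (A : H →L[ℂ] H) (s : ℝ) : H →L[ℂ] H :=
  (2 : ℂ)⁻¹ • (NormedSpace.exp (((s : ℂ) * Complex.I) • A) +
    NormedSpace.exp ((-(s : ℂ) * Complex.I) • A))

/-- The operator sine family `S_A (t) = ∫₀ᵗ cos (τ A) dτ` of a bounded operator `A` on a
complex Hilbert space. -/
noncomputable def opSin {H : Type*} [NormedAddCommGroup H] [InnerProductSpace ℂ H]
    [CompleteSpace H] (A : H →L[ℂ] H) (t : ℝ) : H →L[ℂ] H :=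
  ∫ τ in (0 : ℝ)..t, opCos A τ

/-!
Write `C r = cos (r A)` and `S = S_A`. Then `S' = C`, `S 0 = 0`, `C 0 = 1`, and, since
`C'' = C (iA)² = -C A²` and `C' 0 = 0`, also `C' = -S A²`; moreover `A²` commutes with `S`.
For fixed `s`, `φ r = C (s - r) Θ C r - S (s - r) Θ A² S r` then has derivative
`S (s - r) (A²Θ - ΘA²) C r`, and `φ s - φ 0 = Θ C s - C s Θ`: the identity is the fundamental
theorem of calculus for `φ`.
-/

open NormedSpace (exp)

section CosineFamily

variable {𝔸 : Type*} [NormedRing 𝔸] [NormedAlgebra ℝ 𝔸]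

theorem eq_zero_of_hasDerivAt_zero {E : Type*} [NormedAddCommGroup E] [NormedSpace ℝ E]
    {f : ℝ → E} (hf : ∀ t, HasDerivAt f 0 t) (h0 : f 0 = 0) (t : ℝ) : f t = 0 :=
  h0 ▸ is_const_of_deriv_eq_zero (fun u => (hf u).differentiableAt) (fun u => (hf u).deriv) t 0

variable {C S : ℝ → 𝔸}

theorem eq_mul_of_hasDerivAt {D : ℝ → 𝔸} {B : 𝔸} (hD : ∀ t, HasDerivAt D (C t * B) t)
    (hS : ∀ t, HasDerivAt S (C t) t) (hD0 : D 0 = 0) (hS0 : S 0 = 0) (t : ℝ) :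
    D t = S t * B := by
  refine sub_eq_zero.mp (eq_zero_of_hasDerivAt_zero (f := fun u => D u - S u * B) (fun u => ?_)
    (by simp [hD0, hS0]) t)
  exact ((hD u).sub ((hS u).mul_const B)).congr_deriv (sub_self _)

theorem commute_of_hasDerivAt {B : 𝔸} (hS : ∀ t, HasDerivAt S (C t) t)
    (hBC : ∀ t, Commute B (C t)) (hS0 : S 0 = 0) (t : ℝ) : Commute B (S t) := by
  refine sub_eq_zero.mp (eq_zero_of_hasDerivAt_zero (f := fun u => B * S u - S u * B)
    (fun u => ?_) (by simp [hS0]) t)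
  exact (((hS u).const_mul B).sub ((hS u).mul_const B)).congr_deriv (sub_eq_zero.mpr (hBC u))

theorem commutator_eq_integral_of_hasDerivAt [CompleteSpace 𝔸] {B : 𝔸}
    (hC : ∀ t, HasDerivAt C (-(S t * B)) t) (hS : ∀ t, HasDerivAt S (C t) t)
    (hBS : ∀ t, Commute B (S t)) (hC0 : C 0 = 1) (hS0 : S 0 = 0) (Θ : 𝔸) (s : ℝ) :
    Θ * C s - C s * Θ = ∫ r in (0 : ℝ)..s, S (s - r) * (B * Θ - Θ * B) * C r := by
  have hC_rev : ∀ r, HasDerivAt (fun r => C (s - r)) (S (s - r) * B) r := fun r =>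
    ((hC (s - r)).scomp r ((hasDerivAt_id' r).const_sub s)).congr_deriv (by simp)
  have hS_rev : ∀ r, HasDerivAt (fun r => S (s - r)) (-C (s - r)) r := fun r =>
    ((hS (s - r)).scomp r ((hasDerivAt_id' r).const_sub s)).congr_deriv (by simp)
  have hφ : ∀ r, HasDerivAt (fun r => C (s - r) * Θ * C r - S (s - r) * (Θ * B) * S r)
      (S (s - r) * (B * Θ - Θ * B) * C r) r := fun r => by
    refine ((((hC_rev r).mul_const Θ).mul (hC r)).sub
      (((hS_rev r).mul_const (Θ * B)).mul (hS r))).congr_deriv ?_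
    rw [← (hBS r).eq]
    noncomm_ring
  have hC_cont : Continuous C := continuous_iff_continuousAt.mpr fun t => (hC t).continuousAt
  have hS_cont : Continuous S := continuous_iff_continuousAt.mpr fun t => (hS t).continuousAt
  have hint : IntervalIntegrable (fun r => S (s - r) * (B * Θ - Θ * B) * C r) volume 0 s :=
    (((hS_cont.comp (continuous_sub_left s)).mul continuous_const).mul
      hC_cont).intervalIntegrable _ _
  rw [integral_eq_sub_of_hasDerivAt (fun r _ => hφ r) hint]
  simp [hC0, hS0]

end CosineFamily

section ExpCosh

variable {𝔸 : Type*} [NormedRing 𝔸] [NormedAlgebra ℝ 𝔸] [CompleteSpace 𝔸]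

theorem hasDerivAt_exp_smul_add_exp_neg_smul (x : 𝔸) (t : ℝ) :
    HasDerivAt (fun u : ℝ => exp (u • x) + exp (-u • x)) ((exp (t • x) - exp (-t • x)) * x) t :=
  ((hasDerivAt_exp_smul_const x t).add
    ((hasDerivAt_exp_smul_const x (-t)).scomp t (hasDerivAt_neg t))).congr_deriv
    (by simp [sub_eq_add_neg, add_mul])

theorem hasDerivAt_exp_smul_sub_exp_neg_smul_mul (x : 𝔸) (t : ℝ) :
    HasDerivAt (fun u : ℝ => (exp (u • x) - exp (-u • x)) * x)
      ((exp (t • x) + exp (-t • x)) * x ^ 2) t :=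
  (((hasDerivAt_exp_smul_const x t).sub
    ((hasDerivAt_exp_smul_const x (-t)).scomp t (hasDerivAt_neg t))).mul_const x).congr_deriv
    (by simp [sq, add_mul, mul_assoc])

end ExpCosh

section OperatorCosine

variable {H : Type*} [NormedAddCommGroup H] [InnerProductSpace ℂ H] [CompleteSpace H]
  (A : H →L[ℂ] H)

theorem opCos_eq_exp (t : ℝ) : opCos A t =
    (2 : ℂ)⁻¹ • (exp (t • (Complex.I • A)) + exp (-t • (Complex.I • A))) := by
  simp only [opCos, mul_smul, ← Complex.coe_smul, neg_smul]

theorem opCos_zero : opCos A 0 = 1 := by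
  rw [opCos_eq_exp, neg_zero, zero_smul, NormedSpace.exp_zero, ← two_smul ℂ, smul_smul,
    inv_mul_cancel₀ two_ne_zero, one_smul]

theorem opSin_zero : opSin A 0 = 0 := integral_same

theorem commute_opCos (t : ℝ) : Commute A (opCos A t) := by
  have hA : Commute A (Complex.I • A) := (Commute.refl A).smul_right _
  rw [opCos_eq_exp]
  exact ((hA.smul_right t).exp_right.add_right (hA.smul_right (-t)).exp_right).smul_right _

theorem hasDerivAt_opCos_eq_exp (t : ℝ) : HasDerivAt (opCos A) ((2 : ℂ)⁻¹ •
    ((exp (t • (Complex.I • A)) - exp (-t • (Complex.I • A))) * (Complex.I • A))) t := by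
  rw [show opCos A = _ from funext (opCos_eq_exp A)]
  exact (hasDerivAt_exp_smul_add_exp_neg_smul (Complex.I • A) t).const_smul ((2 : ℂ)⁻¹)

theorem continuous_opCos : Continuous (opCos A) :=
  continuous_iff_continuousAt.mpr fun t => (hasDerivAt_opCos_eq_exp A t).continuousAt

theorem hasDerivAt_opSin (t : ℝ) : HasDerivAt (opSin A) (opCos A t) t :=
  integral_hasDerivAt_right ((continuous_opCos A).intervalIntegrable 0 t)
    ((continuous_opCos A).stronglyMeasurableAtFilter _ _) (continuous_opCos A).continuousAt

theorem hasDerivAt_opCos (t : ℝ) : HasDerivAt (opCos A) (-(opSin A t * A ^ 2)) t := by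
  have hD : ∀ u, HasDerivAt (fun u : ℝ => (2 : ℂ)⁻¹ •
      ((exp (u • (Complex.I • A)) - exp (-u • (Complex.I • A))) * (Complex.I • A)))
      (opCos A u * -(A ^ 2)) u := fun u => by
    refine ((hasDerivAt_exp_smul_sub_exp_neg_smul_mul _ u).const_smul ((2 : ℂ)⁻¹)).congr_deriv ?_
    rw [opCos_eq_exp, smul_mul_assoc, smul_pow, Complex.I_sq, neg_one_smul]
  rw [← mul_neg, ← eq_mul_of_hasDerivAt hD (hasDerivAt_opSin A) (by simp) (opSin_zero A) t]
  exact hasDerivAt_opCos_eq_exp A t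

theorem commute_sq_opSin (t : ℝ) : Commute (A ^ 2) (opSin A t) :=
  commute_of_hasDerivAt (hasDerivAt_opSin A) (fun u => (commute_opCos A u).pow_left 2)
    (opSin_zero A) t

end OperatorCosine

theorem stmt6_general {H : Type*} [NormedAddCommGroup H] [InnerProductSpace ℂ H] [CompleteSpace H]
    (A : H →L[ℂ] H) (Θ : H →L[ℂ] H) :
    ∀ s : ℝ, Θ * opCos A s - opCos A s * Θ =
      ∫ r in (0 : ℝ)..s, opSin A (s - r) * (A ^ 2 * Θ - Θ * A ^ 2) * opCos A r :=
  commutator_eq_integral_of_hasDerivAt (hasDerivAt_opCos A) (hasDerivAt_opSin A)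
    (commute_sq_opSin A) (opCos_zero A) (opSin_zero A) Θ

/-- **Duhamel commutator identity.** For a bounded self-adjoint operator `A` and a
bounded operator `Θ` on a complex Hilbert space,
`Θ ∘ cos (s A) - cos (s A) ∘ Θ = ∫₀ˢ S_A (s - r) ∘ (A²Θ - ΘA²) ∘ cos (r A) dr`. -/
theorem stmt6 {H : Type*} [NormedAddCommGroup H] [InnerProductSpace ℂ H] [CompleteSpace H]
    (A : H →L[ℂ] H) (hA : IsSelfAdjoint A) (Θ : H →L[ℂ] H) :
    ∀ s : ℝ, Θ * opCos A s - opCos A s * Θ =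
      ∫ r in (0 : ℝ)..s, opSin A (s - r) * (A ^ 2 * Θ - Θ * A ^ 2) * opCos A r :=
  stmt6_general A Θ
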